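/- Let Γ_g = [[0, Z],[Zᵀ, 0]] be a symmetric block matrix and let B be a symmetric 2^N×2^N matrix indexed by {0,1}^N. If the composition C of B with N copies of Z is formed, and φ ∈ ℝ^{(m+n)^N → ℝ} is defined by φ(a) = χ(ã) for some χ : {0,1}^N → {0,1}, then C ∘ φφᵀ = (B̃ ∘ φφᵀ) ∘ (⊗^N Γ̂_g); in particular if B ∘ χχᵀ ⪯ 0 then C ∘ φφᵀ ⪯ 0. -/

import Mathlib

open Matrix

/-- The spectral norm (largest singular value) of a real matrix. -/
noncomputable def realMatrixSpectralNorm {m n : Type*} [Fintype m] [Fintype n] [DecidableEq n]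
    (A : Matrix m n ℝ) : ℝ :=
  ‖LinearMap.toContinuousLinearMap (Matrix.toEuclideanLin A)‖

/-- `hatMatrix Z = [[‖Z‖·I, Z], [Zᵀ, ‖Z‖·I]]`. -/
noncomputable def hatMatrix {m n : ℕ} (Z : Matrix (Fin m) (Fin n) ℝ) :
    Matrix (Fin m ⊕ Fin n) (Fin m ⊕ Fin n) ℝ :=
  Matrix.fromBlocks (realMatrixSpectralNorm Z • (1 : Matrix (Fin m) (Fin m) ℝ)) Z
    Zᵀ (realMatrixSpectralNorm Z • (1 : Matrix (Fin n) (Fin n) ℝ))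

/-- The matrix composition `C` of `B` with `N` copies of `Z`:
`C a b = B ã b̃ · ∏ i, Ẑ (a i) (b i)`, where `ã i = 1` iff `a i` lies in the second summand. -/
noncomputable def compN {N m n : ℕ}
    (B : Matrix (Fin N → Bool) (Fin N → Bool) ℝ) (Z : Matrix (Fin m) (Fin n) ℝ) :
    Matrix (Fin N → Fin m ⊕ Fin n) (Fin N → Fin m ⊕ Fin n) ℝ :=
  Matrix.of fun a b =>
    B (fun i => (a i).isRight) (fun i => (b i).isRight) * ∏ i, hatMatrix Z (a i) (b i)

/-!
Entrywise, `C ∘ φφᵀ` is the Hadamard product of the pullback of `B ∘ χχᵀ` along `a ↦ ã` with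
the tensor power `⊗^N Γ̂_g`. The block matrix `Γ̂_g` is positive semidefinite because
`|xᵀ Z y| ≤ ‖Z‖ ‖x‖ ‖y‖`, hence so is its tensor power by the Schur product theorem; and a
negative semidefinite matrix stays negative semidefinite under pullback and under Hadamard
product with a positive semidefinite matrix.
-/

namespace Matrix

lemma abs_dotProduct_mulVec_le_realMatrixSpectralNorm {m n : Type*} [Fintype m] [Fintype n]
    [DecidableEq n] (Z : Matrix m n ℝ) (x : m → ℝ) (y : n → ℝ) :
    |x ⬝ᵥ (Z *ᵥ y)| ≤ realMatrixSpectralNorm Z * ‖WithLp.toLp 2 x‖ * ‖WithLp.toLp 2 y‖ := by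
  have hinner : x ⬝ᵥ (Z *ᵥ y) = inner ℝ (WithLp.toLp 2 x)
      (LinearMap.toContinuousLinearMap (toEuclideanLin Z) (WithLp.toLp 2 y)) := by
    simp [PiLp.inner_apply, dotProduct, mul_comm]
  rw [hinner]
  calc _ ≤ ‖WithLp.toLp 2 x‖ * ‖LinearMap.toContinuousLinearMap (toEuclideanLin Z)
          (WithLp.toLp 2 y)‖ := abs_real_inner_le_norm _ _
    _ ≤ ‖WithLp.toLp 2 x‖ * (realMatrixSpectralNorm Z * ‖WithLp.toLp 2 y‖) := by
        gcongr; exact ContinuousLinearMap.le_opNorm _ _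
    _ = _ := by ring

lemma posSemidef_hatMatrix {m n : ℕ} (Z : Matrix (Fin m) (Fin n) ℝ) :
    (hatMatrix Z).PosSemidef := by
  refine PosSemidef.of_dotProduct_mulVec_nonneg ?_ fun v => ?_
  · ext (i | i) (j | j) <;>
      simp [hatMatrix, conjTranspose_apply, one_apply, eq_comm]
  set s := realMatrixSpectralNorm Z
  set x : Fin m → ℝ := fun i => v (Sum.inl i)
  set y : Fin n → ℝ := fun j => v (Sum.inr j)
  have hv : v = Sum.elim x y := by ext (i | j) <;> rfl
  have hquad : star v ⬝ᵥ (hatMatrix Z *ᵥ v) =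
      s * ‖WithLp.toLp 2 x‖ ^ 2 + s * ‖WithLp.toLp 2 y‖ ^ 2 + 2 * (x ⬝ᵥ (Z *ᵥ y)) := by
    have hyx : y ⬝ᵥ (Zᵀ *ᵥ x) = x ⬝ᵥ (Z *ᵥ y) := by
      rw [dotProduct_mulVec, vecMul_transpose, dotProduct_comm]
    have hxx : x ⬝ᵥ x = ‖WithLp.toLp 2 x‖ ^ 2 := by
      rw [EuclideanSpace.norm_sq_eq]; simp [dotProduct, sq]
    have hyy : y ⬝ᵥ y = ‖WithLp.toLp 2 y‖ ^ 2 := by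
      rw [EuclideanSpace.norm_sq_eq]; simp [dotProduct, sq]
    rw [star_trivial, hv, hatMatrix, fromBlocks_mulVec, sumElim_dotProduct_sumElim]
    simp only [smul_mulVec, one_mulVec, dotProduct_add, dotProduct_smul, smul_eq_mul,
      Sum.elim_comp_inl, Sum.elim_comp_inr, hxx, hyy, hyx]
    ring
  have hbound := abs_le.mp (abs_dotProduct_mulVec_le_realMatrixSpectralNorm Z x y)
  have hs : 0 ≤ s := norm_nonneg _
  rw [hquad]
  -- the form is at least `‖Z‖ (‖x‖ - ‖y‖)²`
  nlinarith [mul_nonneg hs (sq_nonneg (‖WithLp.toLp 2 x‖ - ‖WithLp.toLp 2 y‖))]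

open scoped ComplexOrder in
lemma PosSemidef.prod_apply_pi {𝕜 ι κ : Type*} [RCLike 𝕜] [Finite ι] [Finite κ]
    {M : Matrix κ κ 𝕜} (hM : M.PosSemidef) (s : Finset ι) :
    (of fun a b : ι → κ => ∏ i ∈ s, M (a i) (b i)).PosSemidef := by
  induction s using Finset.cons_induction with
  | empty => simpa [vecMulVec] using posSemidef_vecMulVec_self_star (1 : (ι → κ) → 𝕜)
  | cons i s hi ih =>
    convert (hM.submatrix fun a : ι → κ => a i).hadamard ih using 1
    ext a b
    simp [Finset.prod_cons]

end Matrix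

open Matrix

theorem stmt11_general {N m n : ℕ} (Z : Matrix (Fin m) (Fin n) ℝ)
    (B : Matrix (Fin N → Bool) (Fin N → Bool) ℝ)
    (χ : (Fin N → Bool) → ℝ) :
    ((Matrix.of fun a b : Fin N → Fin m ⊕ Fin n =>
        compN B Z a b * (χ (fun i => (a i).isRight) * χ (fun i => (b i).isRight)))
      = Matrix.of fun a b : Fin N → Fin m ⊕ Fin n =>
        (B (fun i => (a i).isRight) (fun i => (b i).isRight) *
          (χ (fun i => (a i).isRight) * χ (fun i => (b i).isRight))) *
        ∏ i, hatMatrix Z (a i) (b i)) ∧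
    ((-(Matrix.of fun x y : Fin N → Bool => B x y * (χ x * χ y))).PosSemidef →
      (-(Matrix.of fun a b : Fin N → Fin m ⊕ Fin n =>
          compN B Z a b * (χ (fun i => (a i).isRight) * χ (fun i => (b i).isRight)))).PosSemidef) := by
  refine ⟨by ext a b; simp only [of_apply, compN]; ring, fun hBχ => ?_⟩
  have hpullback := hBχ.submatrix fun (a : Fin N → Fin m ⊕ Fin n) i => (a i).isRight
  have hfactor : -(of fun a b : Fin N → Fin m ⊕ Fin n =>
        compN B Z a b * (χ (fun i => (a i).isRight) * χ (fun i => (b i).isRight))) =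
      (-(of fun x y : Fin N → Bool => B x y * (χ x * χ y))).submatrix
          (fun a i => (a i).isRight) (fun a i => (a i).isRight) ⊙
        of fun a b => ∏ i, hatMatrix Z (a i) (b i) := by
    ext a b
    simp only [compN, of_apply, Matrix.neg_apply, submatrix_apply, hadamard_apply]
    ring
  rw [hfactor]
  exact hpullback.hadamard ((posSemidef_hatMatrix Z).prod_apply_pi Finset.univ)

/-- Let `C` be the composition of a symmetric matrix `B` (indexed by `{0,1}^N`) with `N` copies
of `Z`, and let `φ a = χ ã` for a `0/1`-valued `χ`.  Then
`C ∘ φφᵀ = (B̃ ∘ φφᵀ) ∘ (⊗^N Ẑ)`, and if `B ∘ χχᵀ ⪯ 0` then `C ∘ φφᵀ ⪯ 0`. -/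
theorem stmt11 {N m n : ℕ} (Z : Matrix (Fin m) (Fin n) ℝ)
    (B : Matrix (Fin N → Bool) (Fin N → Bool) ℝ) (hB : B.IsSymm)
    (χ : (Fin N → Bool) → ℝ) (hχ : ∀ x, χ x = 0 ∨ χ x = 1) :
    ((Matrix.of fun a b : Fin N → Fin m ⊕ Fin n =>
        compN B Z a b * (χ (fun i => (a i).isRight) * χ (fun i => (b i).isRight)))
      = Matrix.of fun a b : Fin N → Fin m ⊕ Fin n =>
        (B (fun i => (a i).isRight) (fun i => (b i).isRight) *
          (χ (fun i => (a i).isRight) * χ (fun i => (b i).isRight))) *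
        ∏ i, hatMatrix Z (a i) (b i)) ∧
    ((-(Matrix.of fun x y : Fin N → Bool => B x y * (χ x * χ y))).PosSemidef →
      (-(Matrix.of fun a b : Fin N → Fin m ⊕ Fin n =>
          compN B Z a b * (χ (fun i => (a i).isRight) * χ (fun i => (b i).isRight)))).PosSemidef) :=
  stmt11_general Z B χ
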